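/- arXiv:2006.16330 — 4 statements merged into one kernel-verified Lean document; each statement's English description precedes it below -/
import Mathlib

section
/- Let (H, 𝔞) be a right unitary comodule over a weak Hopf *-algebra B. Then the map α : B_s → B(H) defined by α(z)v := v^{(1)} ε(z v^{(2)}) (writing 𝔞(v) = v^{(1)} ⊗ v^{(2)}) satisfies ⟨α(z)v, w⟩ = ⟨v, α(z*)w⟩ for all v, w ∈ H and z ∈ B_s, i.e. α(z)* = α(z*). -/
/-!
Write `c(w, v) = ⟨w, v⁽¹⁾⟩ v⁽²⁾` for the matrix coefficients of the comodule. Then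
`⟨w, α(z) v⟩ = ε(z c(w, v))`, and unitarity says `c(w, v) = S(c(v, w))*`, so the claim reduces to
the identity `ε(z x) = ε(S(x) z)` for `z ∈ B_s`. For `z = ε_s(b)` both sides equal `ε(b x)`: the
left one by the weak counit axiom, the right one by a Sweedler computation that moves `S(x)`
through `ε_s(b) = S(b₍₁₎) b₍₂₎` with the weak counit axiom and coassociativity.
-/

open scoped TensorProduct
open TensorProduct

noncomputable section

/-- The conjugate-linear "star" operation on a tensor product of two star modules,
defined via a choice of bases so that `star (x ⊗ y) = star x ⊗ star y`. -/
def tensorStar (M N : Type) [AddCommGroup M] [Module ℂ M] [Module.Finite ℂ M]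
    [Module.Free ℂ M] [StarAddMonoid M] [AddCommGroup N] [Module ℂ N] [Module.Finite ℂ N]
    [Module.Free ℂ N] [StarAddMonoid N] (t : M ⊗[ℂ] N) : M ⊗[ℂ] N :=
  let bM := Module.Free.chooseBasis ℂ M
  let bN := Module.Free.chooseBasis ℂ N
  ∑ p : Module.Free.ChooseBasisIndex ℂ M × Module.Free.ChooseBasisIndex ℂ N,
    (starRingEnd ℂ) (((bM.tensorProduct bN).repr t) p) • (star (bM p.1) ⊗ₜ[ℂ] star (bN p.2))

/-- A weak Hopf `*`-algebra structure on a finite-dimensional `C*`-algebra `B`. -/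
structure WHA (B : Type) [NormedRing B] [StarRing B] [CStarRing B] [NormedAlgebra ℂ B]
    [StarModule ℂ B] [FiniteDimensional ℂ B] where
  Δ : B →ₗ[ℂ] B ⊗[ℂ] B
  ε : B →ₗ[ℂ] ℂ
  S : B →ₗ[ℂ] B
  coassoc : ∀ b : B, (TensorProduct.assoc ℂ B B B) ((TensorProduct.map Δ LinearMap.id) (Δ b)) =
    (TensorProduct.map LinearMap.id Δ) (Δ b)
  counit_left : ∀ b : B, (TensorProduct.lid ℂ B) ((TensorProduct.map ε LinearMap.id) (Δ b)) = b
  counit_right : ∀ b : B, (TensorProduct.rid ℂ B) ((TensorProduct.map LinearMap.id ε) (Δ b)) = b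
  comul_mul : ∀ a b : B, Δ (a * b) = Δ a * Δ b
  weak_counit : ∀ b c d : B, (TensorProduct.lid ℂ ℂ)
      ((TensorProduct.map (ε ∘ₗ LinearMap.mulLeft ℂ b) (ε ∘ₗ LinearMap.mulRight ℂ d)) (Δ c)) =
    ε (b * c * d)
  weak_comul_one : (TensorProduct.map Δ LinearMap.id) (Δ 1) =
    (Δ 1 ⊗ₜ[ℂ] (1 : B)) * ((TensorProduct.assoc ℂ B B B).symm ((1 : B) ⊗ₜ[ℂ] Δ 1))
  comul_star : ∀ b : B, Δ (star b) = tensorStar B B (Δ b)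
  antipode_mul : ∀ a b : B, S (a * b) = S b * S a
  antipode_one : S 1 = 1
  antipode_comul : ∀ b : B, Δ (S b) =
    (TensorProduct.map S S) ((TensorProduct.comm ℂ B B) (Δ b))
  counit_antipode : ∀ b : B, ε (S b) = ε b
  antipode_left : ∀ b : B, LinearMap.mul' ℂ B ((TensorProduct.map LinearMap.id S) (Δ b)) =
    (TensorProduct.lid ℂ B) ((TensorProduct.map ε LinearMap.id) (Δ 1 * (b ⊗ₜ[ℂ] (1 : B))))
  antipode_right : ∀ b : B, LinearMap.mul' ℂ B ((TensorProduct.map S LinearMap.id) (Δ b)) =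
    (TensorProduct.rid ℂ B) ((TensorProduct.map LinearMap.id ε) (((1 : B) ⊗ₜ[ℂ] b) * Δ 1))

namespace WHA

variable {B : Type} [NormedRing B] [StarRing B] [CStarRing B] [NormedAlgebra ℂ B]
  [StarModule ℂ B] [FiniteDimensional ℂ B]

/-- The target counital map `ε_t(b) = (ε ⊗ id)(Δ(1)(b ⊗ 1))`. -/
def εt (W : WHA B) (b : B) : B :=
  (TensorProduct.lid ℂ B) ((TensorProduct.map W.ε LinearMap.id) (W.Δ 1 * (b ⊗ₜ[ℂ] (1 : B))))

/-- The source counital map `ε_s(b) = (id ⊗ ε)((1 ⊗ b)Δ(1))`. -/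
def εs (W : WHA B) (b : B) : B :=
  (TensorProduct.rid ℂ B) ((TensorProduct.map LinearMap.id W.ε) (((1 : B) ⊗ₜ[ℂ] b) * W.Δ 1))

/-- The target counital subalgebra `B_t = ε_t(B)`. -/
def Bt (W : WHA B) : Submodule ℂ B := Submodule.span ℂ (Set.range W.εt)

/-- The source counital subalgebra `B_s = ε_s(B)`. -/
def Bs (W : WHA B) : Submodule ℂ B := Submodule.span ℂ (Set.range W.εs)

/-- The right adjoint action `b ◁ x = S(x₍₁₎) b x₍₂₎`. -/
def ad (W : WHA B) (b x : B) : B :=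
  LinearMap.mul' ℂ B ((TensorProduct.map W.S (LinearMap.mulLeft ℂ b)) (W.Δ x))

/-- `I` is a (right) coideal of `B`: a unital `*`-subalgebra with `Δ(I) ⊆ I ⊗ B`. -/
def IsCoideal (W : WHA B) (I : Submodule ℂ B) : Prop :=
  (1 : B) ∈ I ∧ (∀ a ∈ I, ∀ b ∈ I, a * b ∈ I) ∧ (∀ a ∈ I, star a ∈ I) ∧
    ∀ a ∈ I, W.Δ a ∈ Submodule.span ℂ {x : B ⊗[ℂ] B | ∃ u ∈ I, ∃ v : B, x = u ⊗ₜ[ℂ] v}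

/-- A coideal is invariant if `span{ b ◁ x : b ∈ I, x ∈ B } = I`. -/
def IsInvariant (W : WHA B) (I : Submodule ℂ B) : Prop :=
  Submodule.span ℂ {y : B | ∃ b ∈ I, ∃ x : B, y = W.ad b x} = I

end WHA

/-- A morphism of weak Hopf `*`-algebras. -/
structure WHAHom {B C : Type} [NormedRing B] [StarRing B] [CStarRing B] [NormedAlgebra ℂ B]
    [StarModule ℂ B] [FiniteDimensional ℂ B] [NormedRing C] [StarRing C] [CStarRing C]
    [NormedAlgebra ℂ C] [StarModule ℂ C] [FiniteDimensional ℂ C]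
    (W : WHA B) (W' : WHA C) where
  π : B →⋆ₐ[ℂ] C
  comul_comp : ∀ b : B, W'.Δ (π b) = (TensorProduct.map π.toLinearMap π.toLinearMap) (W.Δ b)
  antipode_comp : ∀ b : B, W'.S (π b) = π (W.S b)
  counit_comp : ∀ b : B, W'.ε (π b) = W.ε b


/-- A right unitary comodule over a weak Hopf `*`-algebra. -/
structure UComod {B : Type} [NormedRing B] [StarRing B] [CStarRing B] [NormedAlgebra ℂ B]
    [StarModule ℂ B] [FiniteDimensional ℂ B] (W : WHA B)
    (H : Type) [NormedAddCommGroup H] [InnerProductSpace ℂ H] [FiniteDimensional ℂ H] where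
  ρ : H →ₗ[ℂ] H ⊗[ℂ] B
  coassoc : ∀ v : H, (TensorProduct.assoc ℂ H B B) ((TensorProduct.map ρ LinearMap.id) (ρ v)) =
    (TensorProduct.map LinearMap.id W.Δ) (ρ v)
  counit : ∀ v : H, (TensorProduct.rid ℂ H) ((TensorProduct.map LinearMap.id W.ε) (ρ v)) = v
  unitarity : ∀ v w : H,
    (TensorProduct.lid ℂ B) ((TensorProduct.map (innerSL ℂ w).toLinearMap LinearMap.id) (ρ v)) =
    star ((TensorProduct.lid ℂ B) ((TensorProduct.map (innerSL ℂ v).toLinearMap W.S) (ρ w)))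

section TensorStar

variable {M N : Type} [AddCommGroup M] [Module ℂ M] [Module.Finite ℂ M] [Module.Free ℂ M]
  [StarAddMonoid M] [AddCommGroup N] [Module ℂ N] [Module.Finite ℂ N] [Module.Free ℂ N]
  [StarAddMonoid N]

lemma tensorStar_sum {ι : Type} (s : Finset ι) (t : ι → M ⊗[ℂ] N) :
    tensorStar M N (∑ i ∈ s, t i) = ∑ i ∈ s, tensorStar M N (t i) := by
  simp only [tensorStar, map_sum, Finsupp.coe_finsetSum, Finset.sum_apply, Finset.sum_smul]
  exact Finset.sum_comm

lemma tensorStar_tmul [StarModule ℂ M] [StarModule ℂ N] (x : M) (y : N) :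
    tensorStar M N (x ⊗ₜ[ℂ] y) = star x ⊗ₜ[ℂ] star y := by
  have star_eq_sum {P : Type} [AddCommGroup P] [Module ℂ P] [StarAddMonoid P] [StarModule ℂ P]
      {ι : Type} [Fintype ι] (b : Module.Basis ι ℂ P) (x : P) :
      star x = ∑ i, starRingEnd ℂ (b.repr x i) • star (b i) := by
    conv_lhs => rw [← b.sum_repr x, star_sum]
    simp only [star_smul, starRingEnd_apply]
  rw [star_eq_sum (Module.Free.chooseBasis ℂ M) x, star_eq_sum (Module.Free.chooseBasis ℂ N) y,
    sum_tmul, tensorStar, Fintype.sum_prod_type]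
  refine Finset.sum_congr rfl fun i _ => ?_
  rw [tmul_sum]
  refine Finset.sum_congr rfl fun j _ => ?_
  simp [Module.Basis.tensorProduct_repr_tmul_apply, smul_tmul', smul_smul]

end TensorStar

namespace WHA

variable {B : Type} [NormedRing B] [StarRing B] [CStarRing B] [NormedAlgebra ℂ B]
  [StarModule ℂ B] [FiniteDimensional ℂ B] (W : WHA B) {ι : Type} {c : B} {s : Finset ι}
  {p q : ι → B}

lemma comul_star_eq_sum (hc : W.Δ c = ∑ i ∈ s, p i ⊗ₜ[ℂ] q i) :
    W.Δ (star c) = ∑ i ∈ s, star (p i) ⊗ₜ[ℂ] star (q i) := by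
  rw [W.comul_star, hc, tensorStar_sum]
  exact Finset.sum_congr rfl fun i _ => tensorStar_tmul _ _

lemma comul_antipode_eq_sum (hc : W.Δ c = ∑ i ∈ s, p i ⊗ₜ[ℂ] q i) :
    W.Δ (W.S c) = ∑ i ∈ s, W.S (q i) ⊗ₜ[ℂ] W.S (p i) := by
  simp [W.antipode_comul, hc, map_sum]

lemma εs_eq_sum_antipode_mul (hc : W.Δ c = ∑ i ∈ s, p i ⊗ₜ[ℂ] q i) :
    W.εs c = ∑ i ∈ s, W.S (p i) * q i := by
  simp [εs, ← W.antipode_right c, hc, map_sum]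

lemma εs_eq_sum_of_comul_one (hs : W.Δ 1 = ∑ i ∈ s, p i ⊗ₜ[ℂ] q i) (b : B) :
    W.εs b = ∑ i ∈ s, W.ε (b * q i) • p i := by
  simp [εs, hs, Finset.mul_sum, Algebra.TensorProduct.tmul_mul_tmul, map_sum]

lemma counit_mul_mul_eq_sum (hc : W.Δ c = ∑ i ∈ s, p i ⊗ₜ[ℂ] q i) (b d : B) :
    W.ε (b * c * d) = ∑ i ∈ s, W.ε (b * p i) * W.ε (q i * d) := by
  simp [← W.weak_counit, hc, map_sum]

lemma counit_star (b : B) : W.ε (star b) = starRingEnd ℂ (W.ε b) := by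
  obtain ⟨s, hs⟩ := TensorProduct.exists_finset (W.Δ b)
  have h_right : b = ∑ i ∈ s, W.ε i.2 • i.1 := by
    simpa [hs, map_sum] using (W.counit_right b).symm
  have h_left : star b = ∑ i ∈ s, W.ε (star i.1) • star i.2 := by
    simpa [W.comul_star_eq_sum hs, map_sum] using (W.counit_left (star b)).symm
  calc W.ε (star b) = ∑ i ∈ s, starRingEnd ℂ (W.ε i.2) * W.ε (star i.1) := by
        conv_lhs => rw [h_right]
        simp [star_sum, star_smul, map_sum]
    _ = starRingEnd ℂ (W.ε (star (star b))) := by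
        rw [h_left, star_sum, map_sum, map_sum]
        refine Finset.sum_congr rfl fun i _ => ?_
        simp [star_smul, mul_comm]
    _ = starRingEnd ℂ (W.ε b) := by rw [star_star]

/-- The weak counit axiom for `c*`, conjugated. -/
lemma counit_mul_mul_eq_sum_swap (hc : W.Δ c = ∑ i ∈ s, p i ⊗ₜ[ℂ] q i) (b d : B) :
    W.ε (b * c * d) = ∑ i ∈ s, W.ε (b * q i) * W.ε (p i * d) := by
  have h := W.counit_mul_mul_eq_sum (W.comul_star_eq_sum hc) (star d) (star b)
  rw [← star_mul, ← star_mul, ← mul_assoc, W.counit_star] at h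
  simp_rw [← star_mul, W.counit_star] at h
  rw [← Complex.conj_conj (W.ε _), h, map_sum]
  simp [mul_comm]

lemma counit_εs_mul (b x : B) : W.ε (W.εs b * x) = W.ε (b * x) := by
  obtain ⟨s, hs⟩ := TensorProduct.exists_finset (W.Δ 1)
  rw [W.εs_eq_sum_of_comul_one hs, Finset.sum_mul, map_sum,
    ← mul_one b, W.counit_mul_mul_eq_sum_swap hs, mul_one]
  simp

lemma counit_antipode_mul_antipode_mul_eq_sum (hc : W.Δ c = ∑ i ∈ s, p i ⊗ₜ[ℂ] q i) (u b : B) :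
    W.ε (W.S u * W.S c * b) = ∑ i ∈ s, W.ε (q i * u) * W.ε (W.S (p i) * b) := by
  rw [W.counit_mul_mul_eq_sum (W.comul_antipode_eq_sum hc)]
  simp [← W.antipode_mul, W.counit_antipode]

lemma coassoc_eq_sum {T : B → Finset (B × B)} (hT : ∀ x, W.Δ x = ∑ i ∈ T x, i.1 ⊗ₜ[ℂ] i.2)
    (c : B) :
    ∑ i ∈ T c, ∑ j ∈ T i.1, j.1 ⊗ₜ[ℂ] (j.2 ⊗ₜ[ℂ] i.2) =
      ∑ i ∈ T c, ∑ j ∈ T i.2, i.1 ⊗ₜ[ℂ] (j.1 ⊗ₜ[ℂ] j.2) := by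
  simpa [hT, map_sum, sum_tmul, tmul_sum] using W.coassoc c

lemma counit_antipode_mul_εs (u c : B) : W.ε (W.S u * W.εs c) = W.ε (c * u) := by
  choose T hT using fun x : B => TensorProduct.exists_finset (W.Δ x)
  have h_coassoc := congrArg (W.ε ∘ₗ LinearMap.mul' ℂ B ∘ₗ TensorProduct.map W.S
    (TensorProduct.lid ℂ B ∘ₗ TensorProduct.map (W.ε ∘ₗ LinearMap.mulRight ℂ u) LinearMap.id))
    (W.coassoc_eq_sum hT c)
  simp only [map_sum, LinearMap.comp_apply, TensorProduct.map_tmul, LinearMap.mulRight_apply,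
    LinearMap.id_apply, TensorProduct.lid_tmul, LinearMap.mul'_apply, LinearEquiv.coe_coe,
    mul_smul_comm, map_smul, smul_eq_mul] at h_coassoc
  calc W.ε (W.S u * W.εs c) = ∑ i ∈ T c, W.ε (W.S u * W.S i.1 * i.2) := by
        simp [W.εs_eq_sum_antipode_mul (hT c), Finset.mul_sum, map_sum, mul_assoc]
    _ = ∑ i ∈ T c, ∑ j ∈ T i.1, W.ε (j.2 * u) * W.ε (W.S j.1 * i.2) :=
        Finset.sum_congr rfl fun i _ => W.counit_antipode_mul_antipode_mul_eq_sum (hT i.1) u i.2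
    _ = ∑ i ∈ T c, ∑ j ∈ T i.2, W.ε (W.S i.1 * j.2) * W.ε (j.1 * u) := by
        simpa [mul_comm] using h_coassoc
    _ = ∑ i ∈ T c, W.ε (W.S i.1 * i.2 * u) :=
        Finset.sum_congr rfl fun i _ => (W.counit_mul_mul_eq_sum_swap (hT i.2) _ _).symm
    _ = W.ε (c * u) := by
        rw [← map_sum, ← Finset.sum_mul, ← W.εs_eq_sum_antipode_mul (hT c), W.counit_εs_mul]

lemma counit_mul_eq_counit_antipode_mul_of_mem_Bs {z : B} (hz : z ∈ W.Bs) (x : B) :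
    W.ε (z * x) = W.ε (W.S x * z) := by
  let f : B →ₗ[ℂ] ℂ := W.ε ∘ₗ LinearMap.mulRight ℂ x
  let g : B →ₗ[ℂ] ℂ := W.ε ∘ₗ LinearMap.mulLeft ℂ (W.S x)
  suffices W.Bs ≤ LinearMap.eqLocus f g from this hz
  refine Submodule.span_le.mpr ?_
  rintro _ ⟨b, rfl⟩
  simp [f, g, W.counit_εs_mul, W.counit_antipode_mul_εs]

end WHA

lemma inner_rid_map_id_right {H B : Type} [NormedAddCommGroup H] [InnerProductSpace ℂ H]
    [AddCommGroup B] [Module ℂ B] (w : H) (φ : B →ₗ[ℂ] ℂ) (t : H ⊗[ℂ] B) :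
    inner ℂ w (TensorProduct.rid ℂ H (TensorProduct.map LinearMap.id φ t)) =
      φ (TensorProduct.lid ℂ B (TensorProduct.map (innerSL ℂ w).toLinearMap LinearMap.id t)) := by
  induction t using TensorProduct.induction_on with
  | zero => simp
  | tmul v b => simp [mul_comm]
  | add s t hs ht => simp only [map_add, inner_add_right, hs, ht]

lemma lid_map_eq_apply_lid_map_id {M N P : Type} [AddCommGroup M] [Module ℂ M]
    [AddCommGroup N] [Module ℂ N] [AddCommGroup P] [Module ℂ P]
    (f : M →ₗ[ℂ] ℂ) (g : N →ₗ[ℂ] P) (t : M ⊗[ℂ] N) :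
    TensorProduct.lid ℂ P (TensorProduct.map f g t) =
      g (TensorProduct.lid ℂ N (TensorProduct.map f LinearMap.id t)) := by
  induction t using TensorProduct.induction_on with
  | zero => simp
  | tmul v b => simp
  | add s t hs ht => simp only [map_add, hs, ht]

namespace UComod

variable {B : Type} [NormedRing B] [StarRing B] [CStarRing B] [NormedAlgebra ℂ B]
  [StarModule ℂ B] [FiniteDimensional ℂ B] {W : WHA B}
  {H : Type} [NormedAddCommGroup H] [InnerProductSpace ℂ H] [FiniteDimensional ℂ H]

/-- The matrix coefficient `⟨w, v⁽¹⁾⟩ v⁽²⁾` of the comodule. -/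
def matrixCoeff (M : UComod W H) (w v : H) : B :=
  TensorProduct.lid ℂ B (TensorProduct.map (innerSL ℂ w).toLinearMap LinearMap.id (M.ρ v))

lemma matrixCoeff_eq_star_antipode (M : UComod W H) (w v : H) :
    M.matrixCoeff w v = star (W.S (M.matrixCoeff v w)) := by
  rw [matrixCoeff, M.unitarity, lid_map_eq_apply_lid_map_id, matrixCoeff]

end UComod

/-- for a right unitary comodule `(H, ρ)` over a WHA, the map
`α(z) v = v⁽¹⁾ ε(z v⁽²⁾)` satisfies `⟨α(z)v, w⟩ = ⟨v, α(z*)w⟩` for `z ∈ B_s`,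
i.e. `α(z)* = α(z*)`. Here `⟨a, b⟩` denotes the inner product, linear in `a`. -/
theorem comodule_alpha_star {B : Type} [NormedRing B] [StarRing B] [CStarRing B]
    [NormedAlgebra ℂ B] [StarModule ℂ B] [FiniteDimensional ℂ B] (W : WHA B)
    (H : Type) [NormedAddCommGroup H] [InnerProductSpace ℂ H] [FiniteDimensional ℂ H]
    (M : UComod W H)
    (α : B → H → H)
    (hα : ∀ z : B, ∀ v : H, α z v =
      (TensorProduct.rid ℂ H)
        ((TensorProduct.map LinearMap.id (W.ε ∘ₗ LinearMap.mulLeft ℂ z)) (M.ρ v))) :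
    ∀ z ∈ W.Bs, ∀ v w : H,
      (inner ℂ (w : H) (α z v) : ℂ) = inner ℂ (α (star z) w) v := by
  have inner_α (z : B) (v w : H) : inner ℂ w (α z v) = W.ε (z * M.matrixCoeff w v) := by
    rw [hα, inner_rid_map_id_right]
    rfl
  intro z hz v w
  calc inner ℂ w (α z v) = W.ε (z * M.matrixCoeff w v) := inner_α z v w
    _ = W.ε (star (M.matrixCoeff v w) * z) := by
        rw [W.counit_mul_eq_counit_antipode_mul_of_mem_Bs hz, M.matrixCoeff_eq_star_antipode v w,
          star_star]
    _ = starRingEnd ℂ (inner ℂ v (α (star z) w)) := by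
        rw [inner_α, ← W.counit_star, star_mul, star_star]
    _ = inner ℂ (α (star z) w) v := inner_conj_symm _ _

end
end

section
/- Let B be a weak Hopf *-algebra and let I ⊆ B be a coideal such that S(x₍₁₎) a x₍₂₎ ∈ I for all a ∈ I, x ∈ B, and such that every element of I commutes with every element of B_t (in particular, any invariant coideal). Writing a ◁ b := S(b₍₁₎) a b₍₂₎, the following hold: (i) the Yetter–Drinfel'd relation Δ(a ◁ b) = (a₍₁₎ ◁ b₍₂₎) ⊗ S(b₍₁₎) a₍₂₎ b₍₃₎ for all a ∈ I, b ∈ B; (ii) the braided-commutativity relation a b = b₍₁₎ (a ◁ b₍₂₎) for all a, b ∈ I. -/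
open scoped TensorProduct
open TensorProduct

noncomputable section

/-!
Write `a ◁ b = S(b₁) a b₂` as `sandwich S a (Δ b)`, where `sandwich f u (m ⊗ y) = f m * u * y`.
(i): since `Δ` is multiplicative and `Δ ∘ S = (S ⊗ S) ∘ flip ∘ Δ`, `Δ(a ◁ b)` is the sandwich of
`Δ a` by `(Δ ⊗ Δ)(Δ b)` in `B ⊗ B`. Coassociativity rewrites `(Δ ⊗ Δ)(Δ b)` as
`(b₁ ⊗ b₂₍₁₎) ⊗ (b₂₍₂₎ ⊗ b₃)`, after which the first factor is `S(b₂₍₁₎) a₁ b₂₍₂₎ = a₁ ◁ b₂`.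
(ii): coassociativity and the antipode axiom give `b₁ (a ◁ b₂) = b₁ S(b₂) a b₃ = ε_t(b₁) a b₂`;
moving `a` past `ε_t(b₁) ∈ B_t` leaves `a ε_t(b₁) b₂ = a b`.
-/

section General

variable {R M N P A ι κ : Type*} [CommSemiring R] [AddCommMonoid M] [Module R M]
  [AddCommMonoid N] [Module R N] [AddCommMonoid P] [Module R P]

theorem Module.Basis.apply_eq_sum_tensorProduct_repr [Fintype ι] [Fintype κ]
    (bM : Module.Basis ι R M) (bN : Module.Basis κ R N) (f : M ⊗[R] N →ₗ[R] P)
    (t : M ⊗[R] N) :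
    f t = ∑ i, ∑ j, (bM.tensorProduct bN).repr t (i, j) • f (bM i ⊗ₜ bN j) := by
  conv_lhs => rw [← (bM.tensorProduct bN).sum_repr t]
  rw [map_sum, Fintype.sum_prod_type]
  simp only [map_smul, Module.Basis.tensorProduct_apply]

variable [Semiring A] [Algebra R A]

def sandwich (f : M →ₗ[R] A) : A →ₗ[R] M ⊗[R] A →ₗ[R] A :=
  LinearMap.llcomp R _ _ _ (LinearMap.mul' R A) ∘ₗ
    TensorProduct.mapBilinear (RingHom.id R) M A A A f ∘ₗ LinearMap.mul R A

theorem sandwich_apply (f : M →ₗ[R] A) (u : A) (t : M ⊗[R] A) :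
    sandwich f u t = LinearMap.mul' R A (TensorProduct.map f (LinearMap.mulLeft R u) t) := rfl

@[simp]
theorem sandwich_tmul (f : M →ₗ[R] A) (u : A) (m : M) (y : A) :
    sandwich f u (m ⊗ₜ y) = f m * u * y := by
  simp [sandwich_apply, mul_assoc]

theorem mul'_map_id_sandwich_assoc (f : M →ₗ[R] A) (a : A) (X : (A ⊗[R] M) ⊗[R] A) :
    LinearMap.mul' R A (map LinearMap.id (sandwich f a) (TensorProduct.assoc R A M A X)) =
      LinearMap.mul' R A (map (LinearMap.mulRight R a ∘ₗ LinearMap.mul' R A ∘ₗ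
        map LinearMap.id f) LinearMap.id X) := by
  induction X using TensorProduct.induction_on with
  | zero => simp
  | tmul xy z =>
    induction xy using TensorProduct.induction_on with
    | zero => simp
    | tmul x y => simp [mul_assoc]
    | add u v hu hv => simp_all [add_tmul]
  | add X Y hX hY => simp_all

theorem mul'_map_mulRight_comp_of_commute (g : M →ₗ[R] A) {a : A} (hg : ∀ m, a * g m = g m * a)
    (t : M ⊗[R] A) :
    LinearMap.mul' R A (map (LinearMap.mulRight R a ∘ₗ g) LinearMap.id t) =
      a * LinearMap.mul' R A (map g LinearMap.id t) := by
  induction t using TensorProduct.induction_on with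
  | zero => simp
  | tmul m y => simp [← mul_assoc, hg]
  | add t u ht hu => simp_all [mul_add]

theorem lid_map_mul_one_tmul (φ : A →ₗ[R] R) (v : A ⊗[R] A) (y : A) :
    TensorProduct.lid R A (map φ LinearMap.id (v * (1 ⊗ₜ y))) =
      TensorProduct.lid R A (map φ LinearMap.id v) * y := by
  induction v using TensorProduct.induction_on with
  | zero => simp
  | tmul p q => simp [Algebra.TensorProduct.tmul_mul_tmul]
  | add v w hv hw => simp_all [add_mul]

end General

namespace WHA

variable {B : Type} [NormedRing B] [StarRing B] [CStarRing B] [NormedAlgebra ℂ B]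
  [StarModule ℂ B] [FiniteDimensional ℂ B] (W : WHA B)

theorem ad_eq_sandwich (a x : B) : W.ad a x = sandwich W.S a (W.Δ x) := rfl

def εtₗ : B →ₗ[ℂ] B := LinearMap.mul' ℂ B ∘ₗ map LinearMap.id W.S ∘ₗ W.Δ

theorem εtₗ_apply (x : B) : W.εtₗ x = W.εt x := W.antipode_left x

theorem εt_mul (x y : B) :
    W.εt x * y = TensorProduct.lid ℂ B (map W.ε LinearMap.id (W.Δ 1 * (x ⊗ₜ y))) := by
  rw [εt, ← lid_map_mul_one_tmul, mul_assoc, Algebra.TensorProduct.tmul_mul_tmul, mul_one,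
    one_mul]

theorem mul'_map_εtₗ_comul (b : B) :
    LinearMap.mul' ℂ B (map W.εtₗ LinearMap.id (W.Δ b)) = b := by
  have hlid : ∀ t : B ⊗[ℂ] B, LinearMap.mul' ℂ B (map W.εtₗ LinearMap.id t) =
      TensorProduct.lid ℂ B (map W.ε LinearMap.id (W.Δ 1 * t)) := by
    intro t
    induction t using TensorProduct.induction_on with
    | zero => simp
    | tmul x y => simp [εtₗ_apply, εt_mul]
    | add t u ht hu => simp_all [mul_add]
  rw [hlid, ← W.comul_mul, one_mul, W.counit_left]

theorem mul'_map_sandwich_comul (a b : B) :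
    LinearMap.mul' ℂ B (map LinearMap.id (sandwich W.S a ∘ₗ W.Δ) (W.Δ b)) =
      LinearMap.mul' ℂ B (map (LinearMap.mulRight ℂ a ∘ₗ W.εtₗ) LinearMap.id (W.Δ b)) := by
  calc _ = LinearMap.mul' ℂ B
          (map LinearMap.id (sandwich W.S a) (map LinearMap.id W.Δ (W.Δ b))) := by
        rw [map_map, LinearMap.id_comp]
    _ = LinearMap.mul' ℂ B (map LinearMap.id (sandwich W.S a)
          (TensorProduct.assoc ℂ B B B (map W.Δ LinearMap.id (W.Δ b)))) := by rw [W.coassoc]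
    _ = _ := by
        rw [mul'_map_id_sandwich_assoc, map_map, LinearMap.id_comp]
        rfl

theorem mul'_map_sandwich_comul_of_commute {a : B} (ha : ∀ z ∈ W.Bt, a * z = z * a) (b : B) :
    LinearMap.mul' ℂ B (map LinearMap.id (sandwich W.S a ∘ₗ W.Δ) (W.Δ b)) = a * b := by
  have hεt (x : B) : a * W.εtₗ x = W.εtₗ x * a :=
    ha _ (W.εtₗ_apply x ▸ Submodule.subset_span ⟨x, rfl⟩)
  rw [mul'_map_sandwich_comul, mul'_map_mulRight_comp_of_commute _ hεt, mul'_map_εtₗ_comul]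

def antipodeComm : B ⊗[ℂ] B →ₗ[ℂ] B ⊗[ℂ] B :=
  map W.S W.S ∘ₗ (TensorProduct.comm ℂ B B).toLinearMap

theorem comul_sandwich (a : B) (t : B ⊗[ℂ] B) :
    W.Δ (sandwich W.S a t) =
      sandwich W.antipodeComm (W.Δ a) (map W.Δ W.Δ t) := by
  induction t using TensorProduct.induction_on with
  | zero => simp
  | tmul x y => simp [antipodeComm, W.comul_mul, W.antipode_comul]
  | add t u ht hu => simp_all

/-- `(x ⊗ y) ⊗ z ↦ (x ⊗ y₁) ⊗ (y₂ ⊗ z)` -/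
def comulMid : (B ⊗[ℂ] B) ⊗[ℂ] B →ₗ[ℂ] (B ⊗[ℂ] B) ⊗[ℂ] (B ⊗[ℂ] B) :=
  (TensorProduct.assoc ℂ (B ⊗[ℂ] B) B B).toLinearMap ∘ₗ
    map ((TensorProduct.assoc ℂ B B B).symm.toLinearMap ∘ₗ map LinearMap.id W.Δ) LinearMap.id

theorem map_comul_comul_comul (b : B) :
    map W.Δ W.Δ (W.Δ b) = W.comulMid (map W.Δ LinearMap.id (W.Δ b)) := by
  have hcoassoc :
      (TensorProduct.assoc ℂ B B B).symm.toLinearMap ∘ₗ map LinearMap.id W.Δ ∘ₗ W.Δ =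
        map W.Δ LinearMap.id ∘ₗ W.Δ := by
    ext x
    simp [← W.coassoc x]
  calc map W.Δ W.Δ (W.Δ b)
      = map W.Δ (map LinearMap.id LinearMap.id)
          (TensorProduct.assoc ℂ B B B (map W.Δ LinearMap.id (W.Δ b))) := by
        rw [map_id, W.coassoc, map_map, LinearMap.comp_id, LinearMap.id_comp]
    _ = TensorProduct.assoc ℂ (B ⊗[ℂ] B) B B
          (map (map W.Δ LinearMap.id) LinearMap.id (map W.Δ LinearMap.id (W.Δ b))) :=
        map_map_assoc _ _ _ _
    _ = W.comulMid (map W.Δ LinearMap.id (W.Δ b)) := by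
        rw [comulMid, LinearMap.comp_apply, map_map, map_map, LinearMap.comp_assoc,
          hcoassoc]
        rfl

theorem sandwich_comulMid_tmul (s t p q r : B) :
    sandwich W.antipodeComm (s ⊗ₜ t) (W.comulMid ((p ⊗ₜ q) ⊗ₜ r)) =
      W.ad s q ⊗ₜ (W.S p * t * r) := by
  simp only [comulMid, antipodeComm, ad_eq_sandwich, LinearMap.comp_apply, map_tmul,
    LinearEquiv.coe_coe, LinearMap.id_apply]
  induction W.Δ q using TensorProduct.induction_on with
  | zero => simp
  | tmul x y => simp [Algebra.TensorProduct.tmul_mul_tmul]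
  | add u v hu hv => simp_all [add_tmul, tmul_add]

theorem comul_ad (a b : B) :
    W.Δ (W.ad a b) =
      sandwich W.antipodeComm (W.Δ a) (W.comulMid (map W.Δ LinearMap.id (W.Δ b))) := by
  rw [ad_eq_sandwich, comul_sandwich, map_comul_comul_comul]

end WHA

theorem coideal_yetter_drinfeld_braided_general {B : Type} [NormedRing B] [StarRing B] [CStarRing B]
    [NormedAlgebra ℂ B] [StarModule ℂ B] [FiniteDimensional ℂ B] (W : WHA B)
    (I : Submodule ℂ B)
    (hComm : ∀ a ∈ I, ∀ z ∈ W.Bt, a * z = z * a) :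
    letI ι := Module.Free.ChooseBasisIndex ℂ B
    letI bas := Module.Free.chooseBasis ℂ B
    -- (i)  Δ(a ◁ b) = (a₍₁₎ ◁ b₍₂₎) ⊗ S(b₍₁₎) a₍₂₎ b₍₃₎
    (∀ a ∈ I, ∀ b : B, W.Δ (W.ad a b) =
      ∑ s : ι, ∑ t : ι, ∑ p : ι, ∑ q : ι, ∑ r : ι,
        (((bas.tensorProduct bas).repr (W.Δ a)) (s, t) *
          ((((bas.tensorProduct bas).tensorProduct bas).repr
            ((TensorProduct.map W.Δ LinearMap.id) (W.Δ b))) ((p, q), r))) •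
          ((W.ad (bas s) (bas q)) ⊗ₜ[ℂ] (W.S (bas p) * bas t * bas r))) ∧
    -- (ii)  a b = b₍₁₎ (a ◁ b₍₂₎)
    (∀ a ∈ I, ∀ b ∈ I, a * b =
      ∑ i : Module.Free.ChooseBasisIndex ℂ B, ∑ j : Module.Free.ChooseBasisIndex ℂ B,
        (((Module.Free.chooseBasis ℂ B).tensorProduct
            (Module.Free.chooseBasis ℂ B)).repr (W.Δ b)) (i, j) •
          (Module.Free.chooseBasis ℂ B i * W.ad a (Module.Free.chooseBasis ℂ B j))) := by
  set bas := Module.Free.chooseBasis ℂ B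
  refine ⟨fun a _ b => ?_, fun a ha b _ => ?_⟩
  · rw [W.comul_ad]
    refine (bas.apply_eq_sum_tensorProduct_repr bas ((sandwich W.antipodeComm).flip _) _).trans ?_
    refine Finset.sum_congr rfl fun s _ => Finset.sum_congr rfl fun t _ => ?_
    rw [LinearMap.flip_apply, ← LinearMap.comp_apply,
      (bas.tensorProduct bas).apply_eq_sum_tensorProduct_repr bas, Fintype.sum_prod_type]
    simp [Module.Basis.tensorProduct_apply, W.sandwich_comulMid_tmul, Finset.smul_sum, smul_smul]
  · rw [← W.mul'_map_sandwich_comul_of_commute (hComm a ha) b]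
    exact bas.apply_eq_sum_tensorProduct_repr bas
      (LinearMap.mul' ℂ B ∘ₗ map LinearMap.id (sandwich W.S a ∘ₗ W.Δ)) (W.Δ b)

/-- a coideal stable under the right adjoint action and commuting with `B_t`
satisfies the Yetter-Drinfel'd relation and braided commutativity.  Sweedler sums are
expressed through coefficients with respect to a chosen basis of `B`. -/
theorem coideal_yetter_drinfeld_braided {B : Type} [NormedRing B] [StarRing B] [CStarRing B]
    [NormedAlgebra ℂ B] [StarModule ℂ B] [FiniteDimensional ℂ B] (W : WHA B)
    (I : Submodule ℂ B) (hco : W.IsCoideal I)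
    (hAd : ∀ a ∈ I, ∀ x : B, W.ad a x ∈ I)
    (hComm : ∀ a ∈ I, ∀ z ∈ W.Bt, a * z = z * a) :
    letI ι := Module.Free.ChooseBasisIndex ℂ B
    letI bas := Module.Free.chooseBasis ℂ B
    -- (i)  Δ(a ◁ b) = (a₍₁₎ ◁ b₍₂₎) ⊗ S(b₍₁₎) a₍₂₎ b₍₃₎
    (∀ a ∈ I, ∀ b : B, W.Δ (W.ad a b) =
      ∑ s : ι, ∑ t : ι, ∑ p : ι, ∑ q : ι, ∑ r : ι,
        (((bas.tensorProduct bas).repr (W.Δ a)) (s, t) *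
          ((((bas.tensorProduct bas).tensorProduct bas).repr
            ((TensorProduct.map W.Δ LinearMap.id) (W.Δ b))) ((p, q), r))) •
          ((W.ad (bas s) (bas q)) ⊗ₜ[ℂ] (W.S (bas p) * bas t * bas r))) ∧
    -- (ii)  a b = b₍₁₎ (a ◁ b₍₂₎)
    (∀ a ∈ I, ∀ b ∈ I, a * b =
      ∑ i : Module.Free.ChooseBasisIndex ℂ B, ∑ j : Module.Free.ChooseBasisIndex ℂ B,
        (((Module.Free.chooseBasis ℂ B).tensorProduct
            (Module.Free.chooseBasis ℂ B)).repr (W.Δ b)) (i, j) •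
          (Module.Free.chooseBasis ℂ B i * W.ad a (Module.Free.chooseBasis ℂ B j))) :=
  coideal_yetter_drinfeld_braided_general W I hComm

end
end

section
/- Let B be a weak Hopf *-algebra, A a unital *-algebra with a right coaction 𝔞 of B (a *-homomorphism 𝔞 : A → A ⊗ B with (𝔞⊗id)𝔞 = (id⊗Δ)𝔞, (id⊗ε)𝔞 = id_A and 𝔞(1_A) ∈ A ⊗ B_t), and let ◁ : A ⊗ B → A make A a right B-module algebra (a ◁ 1 = a, (ac) ◁ b = (a ◁ b₍₁₎)(c ◁ b₍₂₎), a* ◁ b = (a ◁ S(b)*)*, 1 ◁ b = 1 ◁ ε_s(b)). Assume the braided-commutativity relation a b = b^{(1)} (a ◁ b^{(2)}) holds for all a, b ∈ A (writing 𝔞(b) = b^{(1)} ⊗ b^{(2)}). Then the fixed point algebra A^𝔞 := { a ∈ A : 𝔞(a) = 𝔞(1_A)(a ⊗ 1) } is contained in the center of A. -/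
open scoped TensorProduct
open TensorProduct

noncomputable section

/-!
If `ρ a = ρ 1 (a ⊗ 1)`, then applying the `*`-compatibility of `ρ` gives
`ρ a* = (a* ⊗ 1) ρ 1`. Braided commutativity then yields
`d a* = (a*)⁽¹⁾ (d ◁ (a*)⁽²⁾) = a* 1⁽¹⁾ (d ◁ 1⁽²⁾) = a* (d 1) = a* d` for every `d`,
so `a*` is central, and hence so is `a`.
-/

section TensorSlices

variable {R A B : Type*} [CommSemiring R] [Semiring A] [Algebra R A] [Semiring B] [Algebra R B]

theorem TensorProduct.rid_map_id_mul_tmul_one (f : B →ₗ[R] R) (t : A ⊗[R] B) (a : A) :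
    TensorProduct.rid R A (TensorProduct.map LinearMap.id f (t * (a ⊗ₜ[R] (1 : B)))) =
      TensorProduct.rid R A (TensorProduct.map LinearMap.id f t) * a := by
  induction t using TensorProduct.induction_on with
  | zero => simp
  | tmul x y => simp [Algebra.TensorProduct.tmul_mul_tmul]
  | add s t hs ht => simp [add_mul, hs, ht]

theorem LinearMap.mul'_map_id_tmul_one_mul (f : B →ₗ[R] A) (a : A) (t : A ⊗[R] B) :
    LinearMap.mul' R A (TensorProduct.map LinearMap.id f ((a ⊗ₜ[R] (1 : B)) * t)) =
      a * LinearMap.mul' R A (TensorProduct.map LinearMap.id f t) := by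
  induction t using TensorProduct.induction_on with
  | zero => simp
  | tmul x y => simp [Algebra.TensorProduct.tmul_mul_tmul, mul_assoc]
  | add s t hs ht => simp [mul_add, hs, ht]

end TensorSlices

section BasisStar

variable {R A B ι : Type*} [CommSemiring R] [Semiring A] [Algebra R A] [StarMul A]
  [Semiring B] [Algebra R B] [Star B] [Fintype ι]

/-- `∑ aᵢ ⊗ b i ↦ ∑ star aᵢ ⊗ star (b i)`, computed in the basis `b` of the second factor. -/
def basisStar (b : Module.Basis ι R B) (t : A ⊗[R] B) : A ⊗[R] B :=
  ∑ i, star (TensorProduct.rid R A (TensorProduct.map LinearMap.id (b.coord i) t)) ⊗ₜ[R] star (b i)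

theorem basisStar_mul_tmul_one (b : Module.Basis ι R B) (t : A ⊗[R] B) (a : A) :
    basisStar b (t * (a ⊗ₜ[R] (1 : B))) = (star a ⊗ₜ[R] (1 : B)) * basisStar b t := by
  simp only [basisStar, Finset.mul_sum, TensorProduct.rid_map_id_mul_tmul_one, star_mul,
    Algebra.TensorProduct.tmul_mul_tmul, one_mul]

end BasisStar

theorem commute_of_braided_of_coaction_eq_tmul_one_mul {R A B : Type*} [CommSemiring R]
    [Semiring A] [Algebra R A] [Semiring B] [Algebra R B]
    (ρ : A →ₗ[R] A ⊗[R] B) (act : A →ₗ[R] B →ₗ[R] A)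
    (hbc : ∀ a b : A, a * b = LinearMap.mul' R A (TensorProduct.map LinearMap.id (act a) (ρ b)))
    {x : A} (hx : ρ x = (x ⊗ₜ[R] (1 : B)) * ρ 1) (d : A) : Commute d x := by
  calc d * x = x * LinearMap.mul' R A (TensorProduct.map LinearMap.id (act d) (ρ 1)) := by
        rw [hbc d x, hx, LinearMap.mul'_map_id_tmul_one_mul]
    _ = x * d := by rw [← hbc d 1, mul_one]

theorem fixed_points_central_general {B : Type} [NormedRing B] [StarRing B]
    [NormedAlgebra ℂ B] [FiniteDimensional ℂ B]
    (A : Type) [Ring A] [Algebra ℂ A] [StarRing A]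
    (ρ : A →ₗ[ℂ] A ⊗[ℂ] B) (act : A →ₗ[ℂ] B →ₗ[ℂ] A)
    -- `ρ` is multiplicative and `*`-preserving (a `*`-homomorphism)
    (hstar : ∀ a : A, ρ (star a) =
      ∑ i : Module.Free.ChooseBasisIndex ℂ B,
        (star ((TensorProduct.rid ℂ A)
          ((TensorProduct.map LinearMap.id ((Module.Free.chooseBasis ℂ B).coord i)) (ρ a)))) ⊗ₜ[ℂ]
        star (Module.Free.chooseBasis ℂ B i))
    -- braided commutativity: `a b = b⁽¹⁾ (a ◁ b⁽²⁾)`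
    (hbc : ∀ a b : A, a * b =
      LinearMap.mul' ℂ A ((TensorProduct.map LinearMap.id (act a)) (ρ b))) :
    ∀ a : A, ρ a = ρ 1 * (a ⊗ₜ[ℂ] (1 : B)) → ∀ c : A, a * c = c * a := by
  intro a ha c
  have hρ_star : ∀ x, ρ (star x) = basisStar (Module.Free.chooseBasis ℂ B) (ρ x) := hstar
  have hρ_one : ρ 1 = basisStar (Module.Free.chooseBasis ℂ B) (ρ 1) := by
    rw [← hρ_star, star_one]
  have hρ_star_a : ρ (star a) = (star a ⊗ₜ[ℂ] (1 : B)) * ρ 1 := by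
    rw [hρ_star, ha, basisStar_mul_tmul_one, ← hρ_one]
  have hcomm := commute_of_braided_of_coaction_eq_tmul_one_mul ρ act hbc hρ_star_a (star c)
  simpa using hcomm.star_star.symm.eq

/-- for a braided-commutative coaction, the fixed point algebra is central. -/
theorem fixed_points_central {B : Type} [NormedRing B] [StarRing B] [CStarRing B]
    [NormedAlgebra ℂ B] [StarModule ℂ B] [FiniteDimensional ℂ B] (W : WHA B)
    (A : Type) [Ring A] [Algebra ℂ A] [StarRing A] [StarModule ℂ A]
    (ρ : A →ₗ[ℂ] A ⊗[ℂ] B) (act : A →ₗ[ℂ] B →ₗ[ℂ] A)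
    -- `ρ` is multiplicative and `*`-preserving (a `*`-homomorphism)
    (hmul : ∀ x y : A, ρ (x * y) = ρ x * ρ y)
    (hstar : ∀ a : A, ρ (star a) =
      ∑ i : Module.Free.ChooseBasisIndex ℂ B,
        (star ((TensorProduct.rid ℂ A)
          ((TensorProduct.map LinearMap.id ((Module.Free.chooseBasis ℂ B).coord i)) (ρ a)))) ⊗ₜ[ℂ]
        star (Module.Free.chooseBasis ℂ B i))
    -- coaction axioms
    (hcoassoc : ∀ a : A, (TensorProduct.assoc ℂ A B B)
        ((TensorProduct.map ρ LinearMap.id) (ρ a)) = (TensorProduct.map LinearMap.id W.Δ) (ρ a))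
    (hcounit : ∀ a : A, (TensorProduct.rid ℂ A) ((TensorProduct.map LinearMap.id W.ε) (ρ a)) = a)
    (hone : ρ 1 ∈ Submodule.span ℂ {x : A ⊗[ℂ] B | ∃ u : A, ∃ v ∈ W.Bt, x = u ⊗ₜ[ℂ] v})
    -- `◁` makes `A` a right `B`-module algebra
    (hact_one : ∀ a : A, act a 1 = a)
    (hact_mul : ∀ a c : A, ∀ b : B, act (a * c) b =
      ∑ i : Module.Free.ChooseBasisIndex ℂ B, ∑ j : Module.Free.ChooseBasisIndex ℂ B,
        (((Module.Free.chooseBasis ℂ B).tensorProduct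
            (Module.Free.chooseBasis ℂ B)).repr (W.Δ b)) (i, j) •
          (act a (Module.Free.chooseBasis ℂ B i) * act c (Module.Free.chooseBasis ℂ B j)))
    (hact_star : ∀ (a : A) (b : B), act (star a) b = star (act a (star (W.S b))))
    (hact_unit : ∀ b : B, act 1 b = act 1 (W.εs b))
    -- braided commutativity: `a b = b⁽¹⁾ (a ◁ b⁽²⁾)`
    (hbc : ∀ a b : A, a * b =
      LinearMap.mul' ℂ A ((TensorProduct.map LinearMap.id (act a)) (ρ b))) :
    ∀ a : A, ρ a = ρ 1 * (a ⊗ₜ[ℂ] (1 : B)) → ∀ c : A, a * c = c * a :=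
  fixed_points_central_general A ρ act hstar hbc

end
end

section
/- Let (B_L, Δ_L, S_L, ε_L) be the weak Hopf *-algebra attached to a subgroup L of a finite abelian group G as above, with Ω = G ⊔ {m}. Set e(L)^g := Σ_{l∈L} e^l_{g+l,g+l}, e(L)_g := Σ_{l∈L} e^l_{g,g} (g ∈ G), and e(L)^m := e(L)_m := Σ_{l∈L} e^l_{m,m}. Then: (i) the counital maps are ε_t^{B_L}(e^l_{x,y}) = δ_{l,0} e(L)^x and ε_s^{B_L}(e^l_{x,y}) = δ_{l,0} e(L)_y; (ii) {e(L)^α : α ∈ Ω} is a linear basis of (B_L)_t and {e(L)_α : α ∈ Ω} is a linear basis of (B_L)_s; (iii) {z_β : β ∈ G/L ⊔ {m}} with z_β := Σ_{l∈L, g∈β} e^l_{g,g} for β ∈ G/L and z_m := Σ_{l∈L} e^l_{m,m} is a linear basis of (B_L)_s ∩ (B_L)_t; (iv) (B_L)_s ∩ Z(B_L) = ℂ·1, while (B_L)_s ∩ (B_L)_t ≠ ℂ·1, i.e. B_L is connected and not coconnected. -/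
open scoped TensorProduct
open TensorProduct

noncomputable section

open scoped Matrix.Norms.L2Operator

section BL

variable (G : Type) [AddCommGroup G] [Fintype G] [DecidableEq G]
  (L : AddSubgroup G) [DecidablePred (· ∈ L)]

/-- The underlying algebra `B_L = ⊕_{l ∈ L} End(H^l)` (each `H^l` has orthonormal basis
indexed by `Ω = G ⊔ {m}`). -/
abbrev BL := ↥L → Matrix (G ⊕ Unit) (G ⊕ Unit) ℂ

/-- The matrix units `e^l_{x,y}` of `B_L`. -/
def matUnit (l : L) (x y : G ⊕ Unit) : BL G L :=
  fun l' => if l' = l then Matrix.single x y 1 else 0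

/-- The canonical basis of `B_L`. -/
noncomputable def basL : Module.Basis (Σ _ : L, (G ⊕ Unit) × (G ⊕ Unit)) ℂ (BL G L) :=
  Pi.basis fun _ => Matrix.stdBasis ℂ (G ⊕ Unit) (G ⊕ Unit)

/-- Translation of an index in `Ω = G ⊔ {m}` by a group element (`m` is unaffected). -/
def shiftIdx (x : G ⊕ Unit) (l : G) : G ⊕ Unit :=
  match x with
  | Sum.inl g => Sum.inl (g - l)
  | Sum.inr u => Sum.inr u

/-- The coproduct of `B_L`:
`Δ_L(e^l_{x,y}) = Σ_{l₁+l₂=l} e^{l₁}_{x−l₂,y−l₂} ⊗ e^{l₂}_{x,y}`. -/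
noncomputable def ΔL : BL G L →ₗ[ℂ] BL G L ⊗[ℂ] BL G L :=
  (basL G L).constr ℂ fun p =>
    ∑ l₁ : L, ∑ l₂ : L,
      if l₁ + l₂ = p.1 then
        (matUnit G L l₁ (shiftIdx G p.2.1 (l₂ : G)) (shiftIdx G p.2.2 (l₂ : G))) ⊗ₜ[ℂ]
          (matUnit G L l₂ p.2.1 p.2.2)
      else 0

/-- The antipode of `B_L`: `S_L(e^l_{x,y}) = e^{−l}_{y−l,x−l}`. -/
noncomputable def SL : BL G L →ₗ[ℂ] BL G L :=
  (basL G L).constr ℂ fun p =>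
    matUnit G L (-p.1) (shiftIdx G p.2.2 (p.1 : G)) (shiftIdx G p.2.1 (p.1 : G))

/-- The counit of `B_L`: `ε_L(e^l_{x,y}) = δ_{l,0}`. -/
noncomputable def εL : BL G L →ₗ[ℂ] ℂ :=
  (basL G L).constr ℂ fun p => if p.1 = 0 then (1 : ℂ) else 0

end BL


section BL2

variable (G : Type) [AddCommGroup G] [Fintype G] [DecidableEq G]
  (L : AddSubgroup G) [DecidablePred (· ∈ L)]

/-- The target counital map of `B_L`: `ε_t(b) = (ε ⊗ id)(Δ(1)(b ⊗ 1))`. -/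
noncomputable def εtBL (b : BL G L) : BL G L :=
  (TensorProduct.lid ℂ (BL G L))
    ((TensorProduct.map (εL G L) LinearMap.id) (ΔL G L 1 * (b ⊗ₜ[ℂ] (1 : BL G L))))

/-- The source counital map of `B_L`: `ε_s(b) = (id ⊗ ε)((1 ⊗ b)Δ(1))`. -/
noncomputable def εsBL (b : BL G L) : BL G L :=
  (TensorProduct.rid ℂ (BL G L))
    ((TensorProduct.map LinearMap.id (εL G L)) (((1 : BL G L) ⊗ₜ[ℂ] b) * ΔL G L 1))

/-- `e(L)^α` for `α ∈ Ω = G ⊔ {m}`. -/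
noncomputable def eTgt : (G ⊕ Unit) → BL G L := fun α =>
  match α with
  | Sum.inl g => ∑ l : L, matUnit G L l (Sum.inl (g + (l : G))) (Sum.inl (g + (l : G)))
  | Sum.inr _ => ∑ l : L, matUnit G L l (Sum.inr ()) (Sum.inr ())

/-- `e(L)_α` for `α ∈ Ω = G ⊔ {m}`. -/
noncomputable def eSrc : (G ⊕ Unit) → BL G L := fun α =>
  match α with
  | Sum.inl g => ∑ l : L, matUnit G L l (Sum.inl g) (Sum.inl g)
  | Sum.inr _ => ∑ l : L, matUnit G L l (Sum.inr ()) (Sum.inr ())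

open scoped Classical in
/-- `z_β` for `β ∈ G/L ⊔ {m}`. -/
noncomputable def zBL : ((G ⧸ L) ⊕ Unit) → BL G L := fun β =>
  match β with
  | Sum.inl q => ∑ l : L, ∑ g : G,
      if (QuotientAddGroup.mk g : G ⧸ L) = q then matUnit G L l (Sum.inl g) (Sum.inl g) else 0
  | Sum.inr _ => ∑ l : L, matUnit G L l (Sum.inr ()) (Sum.inr ())

end BL2

/-!
`Δ_L(1) = Σ_{x, l₁, l₂} e^{l₁}_{x−l₂,x−l₂} ⊗ e^{l₂}_{x,x}`, so `ε_t` and `ε_s` vanish on all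
blocks `l ≠ 0` and send `e^0_{x,y}` to `e(L)^x`, resp. `e(L)_y`.

The elements `e(L)^α`, `e(L)_α`, `z_β` and `1` are all block diagonal. A combination
`Σ a_α e(L)_α` has the diagonal `i ↦ a_i` in every block, while `Σ b_α e(L)^α` has the diagonal
`i ↦ b_{i−l}` in block `l`. An element of `(B_L)_s ∩ (B_L)_t` therefore has a diagonal `a`
invariant under translation by `L`, i.e. a function on `G/L ⊔ {m}`, and the `z_β` are the
indicators of its points; as `|G/L ⊔ {m}| ≥ 2`, this intersection is not `ℂ1`. Commuting with
`e^0_{α,β}` forces `a_α = a_β`, whence `(B_L)_s ∩ Z(B_L) = ℂ1`.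
-/

section BlockDiagonal

variable {ι n κ : Type*} (R : Type*) [DecidableEq n] [DecidableEq κ]

def blockDiag [CommSemiring R] : (ι → n → R) →ₗ[R] ι → Matrix n n R :=
  (Matrix.diagonalLinearMap n R R).compLeft ι

@[simp]
lemma blockDiag_apply [CommSemiring R] (d : ι → n → R) (l : ι) :
    blockDiag R d l = Matrix.diagonal (d l) := rfl

lemma blockDiag_injective [CommSemiring R] : Function.Injective (blockDiag (ι := ι) (n := n) R) :=
  fun _ _ h => funext fun l => Matrix.diagonal_injective (congrFun h l)

def blockIndicator [CommSemiring R] (p : ι → n → κ) (k : κ) : ι → Matrix n n R :=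
  blockDiag R fun l i => if p l i = k then 1 else 0

variable {R}

lemma blockDiag_one [CommSemiring R] : blockDiag R (1 : ι → n → R) = 1 := by
  funext l
  exact Matrix.diagonal_one

lemma blockDiag_eq_of_commute [CommSemiring R] [Fintype n] [DecidableEq ι] {d : ι → n → R}
    (hd : ∀ x, x * blockDiag R d = blockDiag R d * x) (l : ι) (i j : n) : d l i = d l j := by
  have h := congrFun (congrFun (congrFun (hd (Pi.single l (Matrix.single i j 1))) l) i) j
  simpa [Matrix.mul_diagonal, Matrix.diagonal_mul] using h.symm

lemma sum_smul_blockIndicator [CommSemiring R] [Fintype κ] (p : ι → n → κ) (c : κ → R) :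
    ∑ k, c k • blockIndicator R p k = blockDiag R fun l i => c (p l i) := by
  simp only [blockIndicator, ← map_smul, ← map_sum]
  congr 1
  ext l i
  simp

lemma mem_span_range_blockIndicator [CommSemiring R] [Fintype κ] (p : ι → n → κ)
    (x : ι → Matrix n n R) :
    x ∈ Submodule.span R (Set.range (blockIndicator R p)) ↔
      ∃ c : κ → R, blockDiag R (fun l i => c (p l i)) = x := by
  simp only [Submodule.mem_span_range_iff_exists_fun, sum_smul_blockIndicator]

lemma linearIndependent_blockIndicator [CommRing R] [Fintype κ] (p : ι → n → κ)
    (hp : ∀ k, ∃ l i, p l i = k) : LinearIndependent R (blockIndicator R p) := by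
  rw [Fintype.linearIndependent_iff]
  intro c hc k
  obtain ⟨l, i, rfl⟩ := hp k
  rw [sum_smul_blockIndicator, ← map_zero (blockDiag R)] at hc
  exact congrFun (congrFun (blockDiag_injective R hc) l) i

end BlockDiagonal

lemma span_range_eq_of_basis {ι κ R M N : Type*} [Semiring R] [AddCommMonoid M] [Module R M]
    [AddCommMonoid N] [Module R N] (b : Module.Basis ι R M) (f : M →ₗ[R] N) (v : κ → N)
    (hb : ∀ i, f (b i) ∈ Submodule.span R (Set.range v)) (hv : ∀ k, v k ∈ Set.range f) :
    Submodule.span R (Set.range f) = Submodule.span R (Set.range v) := by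
  refine le_antisymm (Submodule.span_le.2 ?_) (Submodule.span_mono (Set.range_subset_iff.2 hv))
  rintro _ ⟨m, rfl⟩
  have hm : m ∈ Submodule.span R (Set.range b) := by simp [b.span_eq]
  refine (Submodule.map_span_le f _ _).2 ?_ (Submodule.mem_map_of_mem hm)
  rintro _ ⟨i, rfl⟩
  exact hb i

section Translation

variable {G : Type} [AddCommGroup G] {L : AddSubgroup G}

lemma shiftIdx_zero (x : G ⊕ Unit) : shiftIdx G x 0 = x := by
  cases x <;> simp [shiftIdx]

lemma shiftIdx_eq_iff (x y : G ⊕ Unit) (g : G) :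
    shiftIdx G x g = y ↔ x = shiftIdx G y (-g) := by
  cases x <;> cases y <;> simp [shiftIdx, sub_eq_iff_eq_add]

lemma map_mk_shiftIdx (i : G ⊕ Unit) (l : L) :
    Sum.map (QuotientAddGroup.mk : G → G ⧸ L) id (shiftIdx G i l) =
      Sum.map (QuotientAddGroup.mk : G → G ⧸ L) id i := by
  rcases i with g | u
  · simp [shiftIdx]
  · rfl

lemma factorsThrough_map_mk {X : Type*} {a : G ⊕ Unit → X}
    (ha : ∀ (l : L) i, a (shiftIdx G i l) = a i) :
    Function.FactorsThrough a (Sum.map (QuotientAddGroup.mk : G → G ⧸ L) id) := by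
  rintro (g | u) (g' | u') h
  · have hmem : g - g' ∈ L := by simpa [QuotientAddGroup.eq_iff_sub_mem] using h
    simpa [shiftIdx] using (ha ⟨g - g', hmem⟩ (Sum.inl g)).symm
  · simp at h
  · simp at h
  · rfl

end Translation

section MatrixUnits

variable {G : Type} [AddCommGroup G] [DecidableEq G] {L : AddSubgroup G}

lemma matUnit_eq_single (l : L) (x y : G ⊕ Unit) :
    matUnit G L l x y = Pi.single l (Matrix.single x y 1) := by
  funext l'
  simp [matUnit, Pi.single_apply]

lemma matUnit_apply (l l' : L) (x y i j : G ⊕ Unit) :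
    matUnit G L l x y l' i j = if l' = l ∧ i = x ∧ j = y then 1 else 0 := by
  by_cases h : l' = l <;> simp [matUnit, h, Matrix.single_apply, eq_comm]

variable [Fintype G]

lemma matUnit_mul_matUnit (l₁ l₂ : L) (x y z w : G ⊕ Unit) :
    matUnit G L l₁ x y * matUnit G L l₂ z w =
      if l₁ = l₂ ∧ y = z then matUnit G L l₁ x w else 0 := by
  simp only [matUnit_eq_single]
  by_cases hl : l₁ = l₂
  · subst hl
    rw [← Pi.single_mul]
    by_cases hyz : y = z
    · subst hyz
      simp
    · simp [hyz]
  · funext l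
    by_cases h : l = l₁ <;> simp [Pi.single_apply, hl, h]

variable [DecidablePred (· ∈ L)]

lemma one_eq_sum_matUnit : (1 : BL G L) = ∑ x : G ⊕ Unit, ∑ l : L, matUnit G L l x x := by
  rw [Finset.sum_comm]
  simp_rw [matUnit_eq_single]
  conv_lhs => rw [← Finset.univ_sum_single (1 : BL G L)]
  refine Finset.sum_congr rfl fun l _ => ?_
  rw [Pi.one_apply, ← Matrix.sum_single_one]
  exact map_sum (AddMonoidHom.single (fun _ : L => Matrix (G ⊕ Unit) (G ⊕ Unit) ℂ) l) _ _

lemma basL_apply (l : L) (x y : G ⊕ Unit) : basL G L ⟨l, (x, y)⟩ = matUnit G L l x y := by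
  simp [basL, matUnit_eq_single, Matrix.stdBasis_eq_single]

lemma ΔL_matUnit (l : L) (x y : G ⊕ Unit) :
    ΔL G L (matUnit G L l x y) = ∑ l₁ : L, ∑ l₂ : L,
      if l₁ + l₂ = l then
        matUnit G L l₁ (shiftIdx G x l₂) (shiftIdx G y l₂) ⊗ₜ[ℂ] matUnit G L l₂ x y
      else 0 := by
  rw [← basL_apply]
  exact (basL G L).constr_basis ℂ _ ⟨l, (x, y)⟩

lemma εL_matUnit (l : L) (x y : G ⊕ Unit) :
    εL G L (matUnit G L l x y) = if l = 0 then 1 else 0 := by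
  rw [← basL_apply]
  exact (basL G L).constr_basis ℂ _ ⟨l, (x, y)⟩

lemma blockDiag_eq_sum_matUnit (d : L → G ⊕ Unit → ℂ) :
    blockDiag ℂ d = ∑ x, ∑ l, d l x • matUnit G L l x x := by
  funext l
  ext i j
  simp only [blockDiag_apply, Matrix.diagonal_apply, Finset.sum_apply, Matrix.sum_apply,
    Pi.smul_apply, Matrix.smul_apply, matUnit_apply, smul_eq_mul, mul_ite, mul_one, mul_zero,
    ite_and, Finset.sum_ite_eq, Finset.mem_univ, if_true]
  rcases eq_or_ne i j with rfl | h
  · simp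
  · simp [h, h.symm]

lemma eSrc_eq_blockIndicator : eSrc G L = blockIndicator ℂ (fun (_ : L) i => i) := by
  funext α
  rw [blockIndicator, blockDiag_eq_sum_matUnit]
  rcases α with g | u <;> simp [eSrc]

lemma eTgt_eq_blockIndicator : eTgt G L = blockIndicator ℂ (fun (l : L) i => shiftIdx G i l) := by
  funext α
  rw [blockIndicator, blockDiag_eq_sum_matUnit, Finset.sum_comm]
  simp only [shiftIdx_eq_iff, ite_smul, one_smul, zero_smul, Finset.sum_ite_eq', Finset.mem_univ,
    if_true]
  rcases α with g | u <;> simp [eTgt, shiftIdx]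

open scoped Classical in
lemma zBL_eq_blockIndicator :
    zBL G L =
      blockIndicator ℂ (fun (_ : L) i => Sum.map (QuotientAddGroup.mk : G → G ⧸ L) id i) := by
  funext β
  rw [blockIndicator, blockDiag_eq_sum_matUnit]
  rcases β with q | u
  · simp only [zBL, Sum.map_inl, Sum.map_inr, Fintype.sum_sum_type, Sum.inl.injEq, ite_smul,
      one_smul, zero_smul, reduceCtorEq, if_false, Finset.sum_const_zero, add_zero]
    rw [Finset.sum_comm]
  · simp [zBL]

end MatrixUnits

section CounitalMaps

variable {G : Type} [AddCommGroup G] [Fintype G] [DecidableEq G]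
  {L : AddSubgroup G} [DecidablePred (· ∈ L)]

lemma ΔL_one : ΔL G L 1 = ∑ x : G ⊕ Unit, ∑ l₁ : L, ∑ l₂ : L,
    matUnit G L l₁ (shiftIdx G x l₂) (shiftIdx G x l₂) ⊗ₜ[ℂ] matUnit G L l₂ x x := by
  simp only [one_eq_sum_matUnit, map_sum, ΔL_matUnit]
  refine Finset.sum_congr rfl fun x _ => ?_
  rw [Finset.sum_comm]
  refine Finset.sum_congr rfl fun l₁ _ => ?_
  rw [Finset.sum_comm]
  simp

lemma εtBL_eq_sum (b : BL G L) : εtBL G L b = ∑ x : G ⊕ Unit, ∑ l₁ : L, ∑ l₂ : L,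
    εL G L (matUnit G L l₁ (shiftIdx G x l₂) (shiftIdx G x l₂) * b) • matUnit G L l₂ x x := by
  simp only [εtBL, ΔL_one, Finset.sum_mul, Algebra.TensorProduct.tmul_mul_tmul, mul_one, map_sum,
    TensorProduct.map_tmul, LinearMap.id_coe, id_eq, TensorProduct.lid_tmul]

lemma εsBL_eq_sum (b : BL G L) : εsBL G L b = ∑ x : G ⊕ Unit, ∑ l₁ : L, ∑ l₂ : L,
    εL G L (b * matUnit G L l₂ x x) • matUnit G L l₁ (shiftIdx G x l₂) (shiftIdx G x l₂) := by
  simp only [εsBL, ΔL_one, Finset.mul_sum, Algebra.TensorProduct.tmul_mul_tmul, one_mul, map_sum,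
    TensorProduct.map_tmul, LinearMap.id_coe, id_eq, TensorProduct.rid_tmul]

lemma εL_matUnit_mul_matUnit (l₁ l₂ : L) (x y z w : G ⊕ Unit) :
    εL G L (matUnit G L l₁ x y * matUnit G L l₂ z w) =
      if l₁ = l₂ ∧ y = z ∧ l₁ = 0 then 1 else 0 := by
  rw [matUnit_mul_matUnit]
  by_cases h : l₁ = l₂ ∧ y = z
  · obtain ⟨rfl, rfl⟩ := h
    simp [εL_matUnit]
  · rw [if_neg h, if_neg fun h' => h ⟨h'.1, h'.2.1⟩, map_zero]

lemma εtBL_matUnit (l : L) (x y : G ⊕ Unit) :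
    εtBL G L (matUnit G L l x y) = if l = 0 then eTgt G L x else 0 := by
  rw [εtBL_eq_sum, eTgt_eq_blockIndicator, blockIndicator, blockDiag_eq_sum_matUnit]
  simp_rw [εL_matUnit_mul_matUnit]
  split_ifs with hl
  · subst hl
    simp [ite_and]
  · simp [ite_and, hl]

lemma εsBL_matUnit (l : L) (x y : G ⊕ Unit) :
    εsBL G L (matUnit G L l x y) = if l = 0 then eSrc G L y else 0 := by
  rw [εsBL_eq_sum, eSrc_eq_blockIndicator, blockIndicator, blockDiag_eq_sum_matUnit]
  simp_rw [εL_matUnit_mul_matUnit]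
  split_ifs with hl
  · subst hl
    simp [ite_and, shiftIdx_zero]
  · simp [hl]

variable (G L) in
def εtLinearMap : BL G L →ₗ[ℂ] BL G L :=
  (TensorProduct.lid ℂ _).toLinearMap ∘ₗ TensorProduct.map (εL G L) LinearMap.id ∘ₗ
    LinearMap.mulLeft ℂ (ΔL G L 1) ∘ₗ (TensorProduct.mk ℂ _ _).flip 1

lemma coe_εtLinearMap : ⇑(εtLinearMap G L) = εtBL G L := rfl

variable (G L) in
def εsLinearMap : BL G L →ₗ[ℂ] BL G L :=
  (TensorProduct.rid ℂ _).toLinearMap ∘ₗ TensorProduct.map LinearMap.id (εL G L) ∘ₗ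
    LinearMap.mulRight ℂ (ΔL G L 1) ∘ₗ TensorProduct.mk ℂ _ _ 1

lemma coe_εsLinearMap : ⇑(εsLinearMap G L) = εsBL G L := rfl

lemma span_range_eTgt :
    Submodule.span ℂ (Set.range (eTgt G L)) = Submodule.span ℂ (Set.range (εtBL G L)) := by
  rw [← coe_εtLinearMap]
  refine (span_range_eq_of_basis (basL G L) _ _ (fun ⟨l, x, y⟩ => ?_) fun x => ?_).symm
  · rw [basL_apply, coe_εtLinearMap, εtBL_matUnit]
    split_ifs
    exacts [Submodule.subset_span ⟨x, rfl⟩, Submodule.zero_mem _]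
  · exact ⟨matUnit G L 0 x x, by rw [coe_εtLinearMap, εtBL_matUnit, if_pos rfl]⟩

lemma span_range_eSrc :
    Submodule.span ℂ (Set.range (eSrc G L)) = Submodule.span ℂ (Set.range (εsBL G L)) := by
  rw [← coe_εsLinearMap]
  refine (span_range_eq_of_basis (basL G L) _ _ (fun ⟨l, x, y⟩ => ?_) fun y => ?_).symm
  · rw [basL_apply, coe_εsLinearMap, εsBL_matUnit]
    split_ifs
    exacts [Submodule.subset_span ⟨y, rfl⟩, Submodule.zero_mem _]
  · exact ⟨matUnit G L 0 y y, by rw [coe_εsLinearMap, εsBL_matUnit, if_pos rfl]⟩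

lemma linearIndependent_eTgt : LinearIndependent ℂ (eTgt G L) := by
  rw [eTgt_eq_blockIndicator]
  exact linearIndependent_blockIndicator _ fun x => ⟨0, x, shiftIdx_zero x⟩

lemma linearIndependent_eSrc : LinearIndependent ℂ (eSrc G L) := by
  rw [eSrc_eq_blockIndicator]
  exact linearIndependent_blockIndicator _ fun x => ⟨0, x, rfl⟩

lemma linearIndependent_zBL : LinearIndependent ℂ (zBL G L) := by
  classical
  rw [zBL_eq_blockIndicator]
  refine linearIndependent_blockIndicator _ fun β => ⟨0, ?_⟩
  rcases β with q | u
  · obtain ⟨g, rfl⟩ := QuotientAddGroup.mk_surjective q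
    exact ⟨Sum.inl g, rfl⟩
  · exact ⟨Sum.inr u, rfl⟩

lemma span_range_eSrc_inf_span_range_eTgt :
    Submodule.span ℂ (Set.range (eSrc G L)) ⊓ Submodule.span ℂ (Set.range (eTgt G L)) =
      Submodule.span ℂ (Set.range (zBL G L)) := by
  classical
  ext x
  simp only [Submodule.mem_inf, eSrc_eq_blockIndicator, eTgt_eq_blockIndicator,
    zBL_eq_blockIndicator, mem_span_range_blockIndicator]
  constructor
  · rintro ⟨⟨a, rfl⟩, b, hb⟩
    have hba : ∀ (l : L) i, b (shiftIdx G i l) = a i := fun l i =>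
      congrFun (congrFun (blockDiag_injective ℂ hb) l) i
    have ha : ∀ (l : L) i, a (shiftIdx G i l) = a i := fun l i => by
      have h := hba 0 (shiftIdx G i l)
      rwa [ZeroMemClass.coe_zero, shiftIdx_zero, hba, eq_comm] at h
    refine ⟨Function.extend (Sum.map QuotientAddGroup.mk id) a 0, ?_⟩
    simp only [(factorsThrough_map_mk ha).extend_apply]
  · rintro ⟨c, rfl⟩
    exact ⟨⟨c ∘ Sum.map QuotientAddGroup.mk id, rfl⟩, c ∘ Sum.map QuotientAddGroup.mk id, by
      simp only [Function.comp_apply, map_mk_shiftIdx]⟩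

lemma span_range_eSrc_inf_center :
    Submodule.span ℂ (Set.range (eSrc G L)) ⊓
        Subalgebra.toSubmodule (Subalgebra.center ℂ (BL G L)) =
      Submodule.span ℂ {(1 : BL G L)} := by
  ext x
  rw [Submodule.mem_inf, eSrc_eq_blockIndicator, mem_span_range_blockIndicator,
    Subalgebra.mem_toSubmodule, Subalgebra.mem_center_iff, Submodule.mem_span_singleton]
  constructor
  · rintro ⟨⟨a, rfl⟩, hc⟩
    have hconst := blockDiag_eq_of_commute hc (0 : L)
    refine ⟨a (Sum.inr ()), ?_⟩
    rw [← blockDiag_one, ← map_smul]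
    congr 1
    funext l i
    simpa using hconst (Sum.inr ()) i
  · rintro ⟨c, rfl⟩
    refine ⟨⟨fun _ => c, ?_⟩, fun y => by rw [mul_smul_comm, smul_mul_assoc, mul_one, one_mul]⟩
    rw [← blockDiag_one, ← map_smul]
    congr 1
    funext l i
    simp

lemma span_range_zBL_ne_span_one :
    Submodule.span ℂ (Set.range (zBL G L)) ≠ Submodule.span ℂ {(1 : BL G L)} := by
  classical
  intro h
  have hrank := finrank_span_eq_card (linearIndependent_zBL (G := G) (L := L))
  rw [h, finrank_span_singleton one_ne_zero, Fintype.card_sum, Fintype.card_unit] at hrank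
  have : 0 < Fintype.card (G ⧸ L) := Fintype.card_pos
  omega

end CounitalMaps

theorem BL_counital_structure (G : Type) [AddCommGroup G] [Fintype G] [DecidableEq G]
    (L : AddSubgroup G) [DecidablePred (· ∈ L)] :
    -- (i) the counital maps on matrix units
    (∀ (l : L) (x y : G ⊕ Unit),
      εtBL G L (matUnit G L l x y) = if l = 0 then eTgt G L x else 0) ∧
    (∀ (l : L) (x y : G ⊕ Unit),
      εsBL G L (matUnit G L l x y) = if l = 0 then eSrc G L y else 0) ∧
    -- (ii) `{e(L)^α}` is a basis of `(B_L)_t` and `{e(L)_α}` is a basis of `(B_L)_s`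
    (LinearIndependent ℂ (eTgt G L) ∧
      Submodule.span ℂ (Set.range (eTgt G L)) = Submodule.span ℂ (Set.range (εtBL G L))) ∧
    (LinearIndependent ℂ (eSrc G L) ∧
      Submodule.span ℂ (Set.range (eSrc G L)) = Submodule.span ℂ (Set.range (εsBL G L))) ∧
    -- (iii) `{z_β : β ∈ G/L ⊔ {m}}` is a basis of `(B_L)_s ∩ (B_L)_t`
    (LinearIndependent ℂ (zBL G L) ∧
      Submodule.span ℂ (Set.range (zBL G L)) =
        Submodule.span ℂ (Set.range (εsBL G L)) ⊓ Submodule.span ℂ (Set.range (εtBL G L))) ∧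
    -- (iv) `B_L` is connected but not coconnected
    (Submodule.span ℂ (Set.range (εsBL G L)) ⊓
        Subalgebra.toSubmodule (Subalgebra.center ℂ (BL G L)) =
      Submodule.span ℂ {(1 : BL G L)}) ∧
    (Submodule.span ℂ (Set.range (εsBL G L)) ⊓ Submodule.span ℂ (Set.range (εtBL G L)) ≠
      Submodule.span ℂ {(1 : BL G L)}) := by
  refine ⟨εtBL_matUnit, εsBL_matUnit, ⟨linearIndependent_eTgt, span_range_eTgt⟩,
    ⟨linearIndependent_eSrc, span_range_eSrc⟩, ⟨linearIndependent_zBL, ?_⟩, ?_, ?_⟩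
  · rw [← span_range_eSrc, ← span_range_eTgt, span_range_eSrc_inf_span_range_eTgt]
  · rw [← span_range_eSrc, span_range_eSrc_inf_center]
  · rw [← span_range_eSrc, ← span_range_eTgt, span_range_eSrc_inf_span_range_eTgt]
    exact span_range_zBL_ne_span_one
end
end
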